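/- arXiv:2310.11619 — 7 statements merged into one kernel-verified Lean document; each statement's English description precedes it below -/
import Mathlib

section
/- Let p be an odd prime and let π_0 = (p-1)/2. Then for every integer t with 0 ≤ t ≤ p-1, 2^{2t} · (-1)^t · C(π_0, t) ≡ C(2t, t) (mod p). -/
/-!
Over `ℚ`, `C(2t, t) = (-4)^t C(-1/2, t)`, and `(p - 1) / 2 ≡ -1/2 (mod p)`. Cleared of
denominators, the first identity reads `4^t (-1)^t (x)_t t! = (2t)!` for any `x` with `2x = -1`, in
any commutative ring; taking `x = (p - 1) / 2` in `ZMod p` and cancelling `t!²`, a unit since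
`t < p`, gives the congruence.
-/

open Nat

theorem descPochhammer_eval_neg_half_mul_factorial {R : Type*} [CommRing R] {x : R}
    (hx : 2 * x = -1) (t : ℕ) :
    2 ^ (2 * t) * (-1) ^ t * (descPochhammer R t).eval x * t ! = ((2 * t)! : R) := by
  induction t with
  | zero => simp
  | succ t ih =>
    rw [descPochhammer_succ_eval, show 2 * (t + 1) = 2 * t + 1 + 1 by ring,
      factorial_succ, factorial_succ, factorial_succ]
    push_cast
    linear_combination (-2 * (t + 1) * ((2 * t)! : R)) * hx + (-4 * (x - t) * (t + 1)) * ih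

/-- Let `p` be an odd prime and `π₀ = (p-1)/2`. Then for every `0 ≤ t ≤ p-1`,
`2^{2t} · (-1)^t · C(π₀, t) ≡ C(2t, t) (mod p)`. -/
theorem pow_mul_neg_one_pow_choose_modEq (p : ℕ) (hp : p.Prime) (hodd : Odd p)
    (t : ℕ) (ht : t ≤ p - 1) :
    (2 ^ (2 * t) * (-1) ^ t * (Nat.choose ((p - 1) / 2) t : ℤ)) ≡
      (Nat.choose (2 * t) t : ℤ) [ZMOD p] := by
  have : Fact p.Prime := ⟨hp⟩
  have hhalf : (2 : ZMod p) * ((p - 1) / 2 : ℕ) = -1 := by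
    have h : 2 * ((p - 1) / 2) + 1 = p := by obtain ⟨k, rfl⟩ := hodd; omega
    have h' := congrArg (Nat.cast : ℕ → ZMod p) h
    push_cast [ZMod.natCast_self] at h'
    linear_combination h'
  have hfact : (t ! : ZMod p) ≠ 0 := by
    rw [Ne, ZMod.natCast_eq_zero_iff, hp.dvd_factorial]
    have := hp.pos
    omega
  have key := descPochhammer_eval_neg_half_mul_factorial hhalf t
  rw [descPochhammer_eval_eq_descFactorial, descFactorial_eq_factorial_mul_choose, two_mul,
    ← add_choose_mul_factorial_mul_factorial, ← two_mul] at key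
  rw [← ZMod.intCast_eq_intCast_iff]
  push_cast at key ⊢
  apply mul_right_cancel₀ (mul_ne_zero hfact hfact)
  linear_combination key
end

section
/- Let p be an odd prime, q = p^e with e > 0, and π = (q-1)/2. Then for every integer t with 0 ≤ t < q, 2^{2t} · (-1)^t · C(π, t) ≡ C(2t, t) (mod p). Equivalently, in any commutative ring of characteristic p, (-1)^t · C(π,t) = λ_t where λ_t = 2^{-2t}·C(2t,t) (note 2 is invertible in characteristic p). -/
/-!
Over `ℚ`, `(-4)^t · C(-1/2, t) = C(2t, t)`, and `π = (q - 1)/2` is `-1/2` to `p`-adic precision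
`q`, which is why the congruence holds for `t < q`. Concretely: for `t < p`, both sides of
`(-4)^t · C(m, t) = C(2t, t)` in `ZMod p` satisfy the same first-order recurrence as soon as
`2m + 1 = 0` in `ZMod p`. For larger `t` one splits off the last base-`p` digit with Lucas's theorem,
using that every digit of `π` is `(p - 1)/2`; when `t` has a digit `r > (p - 1)/2`, doubling `t`
carries and both sides vanish.
-/

open Nat

theorem Nat.cast_choose_succ_mul {R : Type*} [CommRing R] (m t : ℕ) :
    (m.choose (t + 1) : R) * (t + 1) = m.choose t * ((m : R) - t) := by
  rcases le_or_gt t m with htm | hmt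
  · have h := congrArg (Nat.cast : ℕ → R) (Nat.choose_succ_right_eq m t)
    push_cast [htm] at h
    exact h
  · simp [Nat.choose_eq_zero_of_lt hmt, Nat.choose_eq_zero_of_lt (hmt.trans (lt_succ_self t))]

theorem Nat.pow_succ_sub_one_div_two {p : ℕ} (hp : Odd p) (e : ℕ) :
    (p ^ (e + 1) - 1) / 2 = p * ((p ^ e - 1) / 2) + (p - 1) / 2 := by
  obtain ⟨k, rfl⟩ := hp
  obtain ⟨u, hu⟩ := (show Odd (2 * k + 1) from odd_two_mul_add_one k).pow (n := e)
  have hq : (2 * u + 1) * (2 * k + 1) = 2 * ((2 * k + 1) * u + k) + 1 := by ring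
  rw [pow_succ, hu, hq]
  simp only [Nat.add_sub_cancel, Nat.mul_div_cancel_left _ two_pos]

namespace ZMod

variable {p : ℕ} [Fact p.Prime]

theorem cast_choose_mul_add {m a s b : ℕ} (ha : a < p) (hb : b < p) :
    ((p * m + a).choose (p * s + b) : ZMod p) = a.choose b * m.choose s := by
  have hp := (Fact.out : p.Prime).pos
  have h := (ZMod.intCast_eq_intCast_iff _ _ p).mpr
    (Choose.choose_modEq_choose_mod_mul_choose_div (p := p) (n := p * m + a) (k := p * s + b))
  rw [Nat.mul_add_mod, Nat.mul_add_mod, Nat.mod_eq_of_lt ha, Nat.mod_eq_of_lt hb,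
    Nat.mul_add_div hp, Nat.mul_add_div hp, Nat.div_eq_of_lt ha, Nat.div_eq_of_lt hb] at h
  exact_mod_cast h

theorem neg_four_pow_mul_choose_of_lt {m t : ℕ} (hm : (2 * m + 1 : ZMod p) = 0) (ht : t < p) :
    (-4 : ZMod p) ^ t * m.choose t = centralBinom t := by
  induction t with
  | zero => simp
  | succ t ih =>
    have hunit : ((t : ZMod p) + 1) ≠ 0 := by
      exact_mod_cast (ZMod.natCast_eq_zero_iff _ _).not.mpr
        (Nat.not_dvd_of_pos_of_lt t.succ_pos ht)
    have hchoose := Nat.cast_choose_succ_mul (R := ZMod p) m t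
    have hcentral := congrArg (Nat.cast : ℕ → ZMod p) (Nat.succ_mul_centralBinom_succ t)
    push_cast at hcentral
    -- `-2 (m - t) = 2t + 1` because `2m = -1`: this is what makes both sides obey one recurrence.
    apply mul_left_cancel₀ hunit
    linear_combination (-4 : ZMod p) ^ t * ((-4) * hchoose - 2 * m.choose t * hm)
      + 2 * (2 * (t : ZMod p) + 1) * ih (lt_of_succ_lt ht) - hcentral

theorem neg_four_pow_mul_choose_pow_sub_one_div_two (hp : Odd p) (e : ℕ) {t : ℕ}
    (ht : t < p ^ e) :
    (-4 : ZMod p) ^ t * ((p ^ e - 1) / 2).choose t = centralBinom t := by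
  induction e generalizing t with
  | zero => simp_all
  | succ e ih =>
    obtain ⟨s, r, hr, rfl⟩ : ∃ s r, r < p ∧ t = p * s + r :=
      ⟨t / p, t % p, Nat.mod_lt _ (Fact.out : p.Prime).pos, (Nat.div_add_mod t p).symm⟩
    have hs : s < p ^ e := by rw [pow_succ'] at ht; nlinarith
    have hdigit : 2 * ((p - 1) / 2) + 1 = p := by obtain ⟨k, rfl⟩ := hp; omega
    have hpow : (-4 : ZMod p) ^ (p * s + r) = (-4) ^ r * (-4) ^ s := by
      rw [pow_add, pow_mul, ZMod.pow_card, mul_comm]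
    rw [hpow, Nat.pow_succ_sub_one_div_two hp, cast_choose_mul_add (by omega) hr,
      centralBinom_eq_two_mul_choose]
    rcases lt_or_ge (2 * r) p with hnc | hc
    · have hbase : (-4 : ZMod p) ^ r * ((p - 1) / 2).choose r = centralBinom r := by
        refine neg_four_pow_mul_choose_of_lt ?_ hr
        exact_mod_cast (congrArg (Nat.cast : ℕ → ZMod p) hdigit).trans (ZMod.natCast_self p)
      rw [show 2 * (p * s + r) = p * (2 * s) + 2 * r by ring, cast_choose_mul_add hnc hr,
        ← centralBinom_eq_two_mul_choose, ← centralBinom_eq_two_mul_choose, ← hbase, ← ih hs]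
      ring
    · -- doubling `t` carries out of the last digit, and both sides vanish
      have hcarry : 2 * (p * s + r) = p * (2 * s + 1) + (2 * r - p) := by
        rw [mul_add p, mul_one, mul_left_comm]; omega
      rw [hcarry,
        cast_choose_mul_add (by omega) hr, Nat.choose_eq_zero_of_lt (by omega : 2 * r - p < r),
        Nat.choose_eq_zero_of_lt (by omega : (p - 1) / 2 < r)]
      simp

end ZMod

theorem pow_mul_neg_one_pow_choose_modEq_prime_pow_general (p e : ℕ) (hp : p.Prime) (hodd : Odd p)
    (t : ℕ) (ht : t < p ^ e) :
    (2 ^ (2 * t) * (-1) ^ t * (Nat.choose ((p ^ e - 1) / 2) t : ℤ)) ≡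
      (Nat.choose (2 * t) t : ℤ) [ZMOD p] := by
  have := Fact.mk hp
  rw [← ZMod.intCast_eq_intCast_iff, ← centralBinom_eq_two_mul_choose]
  push_cast
  rw [pow_mul, ← mul_pow, ← ZMod.neg_four_pow_mul_choose_pow_sub_one_div_two hodd e ht]
  norm_num

/-- Let `p` be an odd prime, `q = p^e` with `e > 0`, and `π = (q-1)/2`. Then for every
`0 ≤ t < q`, `2^{2t} · (-1)^t · C(π, t) ≡ C(2t, t) (mod p)`; equivalently, in any commutative
ring of characteristic `p`, `(-1)^t · C(π, t) = λ_t` where `λ_t = 2^{-2t}·C(2t,t)`. -/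
theorem pow_mul_neg_one_pow_choose_modEq_prime_pow (p e : ℕ) (hp : p.Prime) (hodd : Odd p)
    (he : 0 < e) (t : ℕ) (ht : t < p ^ e) :
    (2 ^ (2 * t) * (-1) ^ t * (Nat.choose ((p ^ e - 1) / 2) t : ℤ)) ≡
      (Nat.choose (2 * t) t : ℤ) [ZMOD p] :=
  pow_mul_neg_one_pow_choose_modEq_prime_pow_general p e hp hodd t ht
end

section
/- Let S be a commutative ring of odd prime characteristic p, let q > 1 be a power of p, and set π = (q-1)/2. Then in the polynomial ring S[x,y,z], z^q = z · ∑_{t=0}^{π} λ_t · (xy)^{π-t} · (xy - z²)^t, where λ_t = (-1)^t·C(π,t) (equivalently the image of 2^{-2t}·C(2t,t) in S). -/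
open MvPolynomial Finset

/-- Let `S` be a commutative ring of odd prime characteristic `p`, let `q = p^e > 1` be a power
of `p`, and set `π = (q-1)/2`. Then in `S[x,y,z]` (with `x = X 0`, `y = X 1`, `z = X 2`),
`z^q = z · ∑_{t=0}^{π} λ_t (xy)^{π-t} (xy - z²)^t`, where `λ_t = (-1)^t·C(π,t)` in `S`. -/
theorem z_pow_q_eq {S : Type*} [CommRing S] (p e : ℕ) (hp : p.Prime) (hodd : Odd p)
    [CharP S p] (he : 0 < e) :
    (X 2 : MvPolynomial (Fin 3) S) ^ (p ^ e) =
      X 2 * ∑ t ∈ Finset.range ((p ^ e - 1) / 2 + 1),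
        C ((-1) ^ t * (Nat.choose ((p ^ e - 1) / 2) t : S)) *
          (X 0 * X 1) ^ ((p ^ e - 1) / 2 - t) *
          (X 0 * X 1 - (X 2) ^ 2) ^ t := by
  set π := (p ^ e - 1) / 2 with hπ
  have hsum : ∑ t ∈ Finset.range (π + 1),
      C ((-1) ^ t * (Nat.choose π t : S)) *
        (X 0 * X 1) ^ (π - t) * (X 0 * X 1 - (X 2) ^ 2) ^ t
      = ((X 2 : MvPolynomial (Fin 3) S) ^ 2) ^ π := by
    have : ((X 2 : MvPolynomial (Fin 3) S) ^ 2) ^ π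
        = (((X 2 : MvPolynomial (Fin 3) S) ^ 2 - X 0 * X 1) + X 0 * X 1) ^ π := by ring
    rw [this, add_pow]
    refine Finset.sum_congr rfl fun t ht => ?_
    have h1 : ((X 2 : MvPolynomial (Fin 3) S) ^ 2 - X 0 * X 1) ^ t
        = (-1) ^ t * (X 0 * X 1 - (X 2) ^ 2) ^ t := by
      rw [show (X 2 : MvPolynomial (Fin 3) S) ^ 2 - X 0 * X 1
          = -(X 0 * X 1 - (X 2) ^ 2) by ring, neg_pow]
    rw [h1]
    simp only [map_mul, map_pow, map_neg, map_one, map_natCast]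
    ring
  rw [hsum, ← pow_mul]
  obtain ⟨k, hk⟩ := hodd.pow (n := e)
  have hπk : π = k := by omega
  rw [hπk, hk]
  ring
end

section
/- If M is an m × n matrix over a commutative ring with m ≠ n (say of sizes (n+ℓ) × n or n × (n+ℓ) with ℓ > 0), then the Pfaffian of the skew-symmetric block matrix [[0, M], [-Mᵀ, 0]] (of size (m+n) × (m+n)) is zero. -/
/-!
Sign the indices by a unit `s i = ±1` so that `A i j` vanishes unless `s i ≠ s j`. Every
nonzero term of the expansion of `pf A` deletes one index of each sign, so the minor it
multiplies is again signed with the same sign sum. Since the empty matrix has sign sum `0`, a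
nonzero sign sum forces `pf A = 0`. For `[[0, M], [-Mᵀ, 0]]` sign the rows of `M` by `1` and its
columns by `-1`: the sign sum is `m - n ≠ 0`.
-/

open Finset Matrix

/-- The Pfaffian of an `n × n` matrix over a commutative ring, defined by the cofactor-type
expansion along the last column: `Pf` of the empty matrix is `1`, `Pf` of odd-size matrices is
`0`, and `Pf A = ∑_i (-1)^{i+j+H(j-i)} A_{i,j} Pf(A_{î,ĵ})` with `j` the last index. -/
def pf {R : Type*} [CommRing R] : (n : ℕ) → Matrix (Fin n) (Fin n) R → R
  | 0, _ => 1
  | 1, _ => 0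
  | (n + 2), A =>
      ∑ i : Fin (n + 1),
        (-1) ^ (i : ℕ) * A i.castSucc (Fin.last (n + 1)) *
          pf n (A.submatrix (fun k => (i.succAbove k).castSucc)
            (fun k => (i.succAbove k).castSucc))

lemma Int.units_add_eq_zero_of_ne {u v : ℤˣ} (h : u ≠ v) : (u : ℤ) + v = 0 := by
  simp [Int.units_ne_iff_eq_neg.mp h]

theorem pf_eq_zero_of_unbalanced_signing {R : Type*} [CommRing R] :
    ∀ (n : ℕ) (A : Matrix (Fin n) (Fin n) R) (s : Fin n → ℤˣ),
      (∀ i j, s i = s j → A i j = 0) → ∑ i, (s i : ℤ) ≠ 0 → pf n A = 0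
  | 0, _, _, _, hs => absurd (by simp) hs
  | 1, _, _, _, _ => rfl
  | n + 2, A, s, hA, hs => by
    rw [pf]
    refine sum_eq_zero fun i _ => ?_
    by_cases hsi : s i.castSucc = s (Fin.last (n + 1))
    · simp [hA _ _ hsi]
    · have hsum : ∑ j, (s j : ℤ) = ∑ k : Fin n, (s (i.succAbove k).castSucc : ℤ) := by
        rw [Fin.sum_univ_castSucc, Fin.sum_univ_succAbove _ i]
        linear_combination Int.units_add_eq_zero_of_ne hsi
      rw [pf_eq_zero_of_unbalanced_signing n (A.submatrix _ _)
        (fun k => s (i.succAbove k).castSucc) (fun _ _ => hA _ _) (hsum ▸ hs), mul_zero]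

/-- If `M` is a non-square `m × n` matrix over a commutative ring (`m ≠ n`), then the Pfaffian
of the skew-symmetric block matrix `[[0, M], [-Mᵀ, 0]]` of size `(m+n) × (m+n)` is zero. -/
theorem pf_fromBlocks_nonSquare {R : Type*} [CommRing R] {m n : ℕ} (h : m ≠ n)
    (M : Matrix (Fin m) (Fin n) R) :
    pf (m + n)
      ((Matrix.fromBlocks 0 M (-Mᵀ) 0).submatrix finSumFinEquiv.symm finSumFinEquiv.symm)
      = 0 := by
  let s : Fin m ⊕ Fin n → ℤˣ := Sum.elim 1 (-1)
  refine pf_eq_zero_of_unbalanced_signing _ _ (s ∘ finSumFinEquiv.symm) ?_ ?_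
  · intro i j hij
    simp only [Function.comp_apply, submatrix_apply] at hij ⊢
    generalize finSumFinEquiv.symm i = x, finSumFinEquiv.symm j = y at hij ⊢
    rcases x with _ | _ <;> rcases y with _ | _ <;> simp_all [s]
  · have hsum : ∑ j, (s (finSumFinEquiv.symm j) : ℤ) = m - n := by
      rw [← Equiv.sum_comp finSumFinEquiv]
      simp [s, Fintype.sum_sum_type, sub_eq_add_neg]
    simpa [hsum, sub_eq_zero] using h
end

section
/- Let d be a positive integer, F = xy - z², and for n = 2N + ν with N ≥ 0 and ν ∈ {0,1} define A_n = z^ν · ∑_{t=0}^{N} (-1)^{t+ν} · (∏_{h=1}^{N+t+ν} (d-(2h-1))) · (∏_{h=t+1}^{N} (d-2h)) · C(N,t) · (xy)^{N-t} · F^t in ℤ[x,y,z]. Then det(L_n) = A_n for all n ≥ 0, where L_n is the tridiagonal matrix with diagonal entries (2i-(d+1))z, superdiagonal i·x, subdiagonal -((d+1)-i)y. -/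
open Finset MvPolynomial

/-- `Lmat R d n` is the `n × n` tridiagonal matrix over `R[x,y,z]` (with `x = X 0`, `y = X 1`,
`z = X 2`) whose `(i,j)`-entry (1-indexed) is `(2i-(d+1))z` when `i = j`, `i·x` when `j = i+1`,
`-((d+1)-i)y` when `j = i-1`, and `0` otherwise. -/
noncomputable def Lmat (R : Type*) [CommRing R] (d n : ℕ) :
    Matrix (Fin n) (Fin n) (MvPolynomial (Fin 3) R) :=
  Matrix.of fun i j =>
    if (i : ℕ) = (j : ℕ) then
      C ((2 * ((i : ℕ) : ℤ) + 2 - ((d : ℤ) + 1) : ℤ) : R) * X 2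
    else if (j : ℕ) = (i : ℕ) + 1 then
      C ((((i : ℕ) : ℤ) + 1 : ℤ) : R) * X 0
    else if (i : ℕ) = (j : ℕ) + 1 then
      C ((-(((d : ℤ) + 1) - (((i : ℕ) : ℤ) + 1)) : ℤ) : R) * X 1
    else 0

/-- `Apoly d n` is `A_n = z^ν ∑_{t=0}^{N} (-1)^{t+ν} (∏_{h=1}^{N+t+ν}(d-(2h-1)))
(∏_{h=t+1}^{N}(d-2h)) C(N,t) (xy)^{N-t} F^t` where `n = 2N+ν`, `ν = n % 2`, `F = xy - z²`. -/
noncomputable def Apoly (d n : ℕ) : MvPolynomial (Fin 3) ℤ :=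
  (X 2) ^ (n % 2) *
    ∑ t ∈ Finset.range (n / 2 + 1),
      C ((-1) ^ (t + n % 2) *
          (∏ h ∈ Finset.Icc 1 (n / 2 + t + n % 2), ((d : ℤ) - (2 * (h : ℤ) - 1))) *
          (∏ h ∈ Finset.Icc (t + 1) (n / 2), ((d : ℤ) - 2 * (h : ℤ))) *
          (Nat.choose (n / 2) t : ℤ)) *
        (X 0 * X 1) ^ (n / 2 - t) * (X 0 * X 1 - (X 2) ^ 2) ^ t



namespace DetLmatAux

def Pp (d : ℤ) (m : ℕ) : ℤ := ∏ h ∈ Finset.Icc 1 m, (d - (2 * (h : ℤ) - 1))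
def Qp (d : ℤ) (a b : ℕ) : ℤ := ∏ h ∈ Finset.Icc a b, (d - 2 * (h : ℤ))
def cB (d : ℤ) (N t : ℕ) : ℤ := (-1) ^ t * Pp d (N + t) * Qp d (t + 1) N * (N.choose t : ℤ)
def cC (d : ℤ) (N t : ℕ) : ℤ :=
  (-1) ^ (t + 1) * Pp d (N + t + 1) * Qp d (t + 1) N * (N.choose t : ℤ)

lemma Pp_succ (d : ℤ) (m : ℕ) : Pp d (m + 1) = Pp d m * (d - (2 * ((m : ℤ) + 1) - 1)) := by
  rw [Pp, Finset.prod_Icc_succ_top (by omega)]; push_cast [Pp]; ring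

lemma Qp_succ_top (d : ℤ) {a b : ℕ} (h : a ≤ b + 1) :
    Qp d a (b + 1) = Qp d a b * (d - 2 * ((b : ℤ) + 1)) := by
  rw [Qp, Finset.prod_Icc_succ_top h]; push_cast [Qp]; ring

lemma Qp_bot (d : ℤ) {a b : ℕ} (h : a ≤ b) :
    Qp d a b = (d - 2 * (a : ℤ)) * Qp d (a + 1) b := by
  have hi : Finset.Icc a b = insert a (Finset.Icc (a + 1) b) := by
    ext m; simp only [Finset.mem_Icc, Finset.mem_insert]; omega
  rw [Qp, Qp, hi, Finset.prod_insert (by simp)]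

lemma Qp_empty (d : ℤ) (b : ℕ) : Qp d (b + 1) b = 1 := by
  rw [Qp, Finset.Icc_eq_empty (by omega), Finset.prod_empty]

lemma cB_zero (d : ℤ) (N : ℕ) : cB d N (N + 1) = 0 := by
  simp [cB, Nat.choose_succ_self]

lemma cC_zero (d : ℤ) (N : ℕ) : cC d N (N + 1) = 0 := by
  simp [cC, Nat.choose_succ_self]

/-- termwise ★2 -/
lemma coef2 (d : ℤ) (N t : ℕ) (ht : t ≤ N + 1) :
    cC d (N + 1) t =
      (4 * N + 5 - d) * cB d (N + 1) t + (2 * N + 2) * (d - 2 * N - 2) * cC d N t := by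
  rcases eq_or_lt_of_le ht with rfl | h
  · rw [cC_zero]
    simp only [cC, cB, Nat.choose_self, Nat.cast_one, Qp_empty]
    have h1 : N + 1 + (N + 1) + 1 = (N + 1 + (N + 1)) + 1 := rfl
    rw [h1, Pp_succ]
    push_cast
    ring
  · have ht' : t ≤ N := by omega
    have hP : N + 1 + t + 1 = (N + t + 1) + 1 := by omega
    have hP2 : N + 1 + t = N + t + 1 := by omega
    rw [cC, cB, cC, hP, hP2, Pp_succ, Qp_succ_top d (by omega : t + 1 ≤ N + 1)]
    have hc : ((N + 1).choose t : ℤ) * ((N : ℤ) + 1 - t) = (N.choose t : ℤ) * ((N : ℤ) + 1) := by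
      have := Nat.choose_mul_succ_eq N t
      have h2 : ((N + 1 - t : ℕ) : ℤ) = (N : ℤ) + 1 - t := by
        push_cast [Nat.cast_sub (by omega : t ≤ N + 1)]; ring
      calc ((N + 1).choose t : ℤ) * ((N : ℤ) + 1 - t)
          = (((N + 1).choose t * (N + 1 - t) : ℕ) : ℤ) := by push_cast [h2]; ring
        _ = ((N.choose t * (N + 1) : ℕ) : ℤ) := by rw [← this]
        _ = (N.choose t : ℤ) * ((N : ℤ) + 1) := by push_cast; ring
    push_cast
    linear_combination (2 : ℤ) * (-1) ^ (t + 1) * Pp d (N + t + 1) * Qp d (t + 1) N *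
      (d - 2 * ↑N - 2) * hc

end DetLmatAux

namespace DetLmatAux

/-- termwise ★1 -/
lemma coef1 (d : ℤ) (N t : ℕ) (ht : t ≤ N + 1) :
    cB d (N + 1) t =
      (4 * N + 3 - d) * cC d N t - (if t = 0 then 0 else (4 * N + 3 - d) * cC d N (t - 1)) +
        (2 * N + 1) * (d - 2 * N - 1) * cB d N t := by
  rcases t with _ | s
  · rw [if_pos rfl, sub_zero]
    simp only [cB, cC, Nat.choose_zero_right, Nat.add_zero, pow_zero, pow_one, Nat.cast_one]
    rw [Qp_succ_top d (by omega : 1 ≤ N + 1), Pp_succ]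
    push_cast; ring
  · rw [if_neg (by omega : ¬(s + 1 = 0))]
    simp only [Nat.add_sub_cancel]
    rcases eq_or_lt_of_le ht with hNe | hlt
    · have hsN : s = N := by omega
      subst hsN
      rw [cB_zero, cC_zero]
      simp only [cB, cC, Nat.choose_self, Nat.cast_one, Qp_empty]
      have h1 : s + 1 + (s + 1) = (s + s + 1) + 1 := by omega
      rw [h1, Pp_succ]
      push_cast; ring
    · have hsN : s + 1 ≤ N := by omega
      simp only [cB, cC]
      have h1 : N + 1 + (s + 1) = (N + s + 1) + 1 := by omega
      have h2 : N + (s + 1) + 1 = (N + s + 1) + 1 := by omega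
      have h3 : N + (s + 1) = N + s + 1 := by omega
      rw [h1, h2, h3, Pp_succ, Qp_succ_top d (by omega : s + 2 ≤ N + 1),
        Qp_bot d (by omega : s + 1 ≤ N)]
      have hch : ((N + 1).choose (s + 1) : ℤ) = (N.choose s : ℤ) + (N.choose (s + 1) : ℤ) := by
        rw [Nat.choose_succ_succ]; push_cast; ring
      have hc : (N.choose (s + 1) : ℤ) * ((s : ℤ) + 1) = (N.choose s : ℤ) * ((N : ℤ) - s) := by
        have := Nat.choose_succ_right_eq N s
        have h4 : ((N - s : ℕ) : ℤ) = (N : ℤ) - s := by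
          rw [Nat.cast_sub (by omega : s ≤ N)]
        calc (N.choose (s + 1) : ℤ) * ((s : ℤ) + 1)
            = ((N.choose (s + 1) * (s + 1) : ℕ) : ℤ) := by push_cast; ring
          _ = ((N.choose s * (N - s) : ℕ) : ℤ) := by rw [this]
          _ = (N.choose s : ℤ) * ((N : ℤ) - s) := by push_cast [h4]; ring
      rw [hch]
      push_cast
      linear_combination (-2 : ℤ) * (2 * (N : ℤ) + 1) * (-1) ^ (s + 1) * Pp d (N + s + 1) *
        Qp d (s + 2) N * hc

end DetLmatAux

namespace DetLmatAux

noncomputable def term (N t : ℕ) : MvPolynomial (Fin 3) ℤ :=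
  (X 0 * X 1) ^ (N - t) * (X 0 * X 1 - (X 2) ^ 2) ^ t

noncomputable def Bp (d : ℤ) (N : ℕ) : MvPolynomial (Fin 3) ℤ :=
  ∑ t ∈ Finset.range (N + 1), C (cB d N t) * term N t

noncomputable def Cpo (d : ℤ) (N : ℕ) : MvPolynomial (Fin 3) ℤ :=
  ∑ t ∈ Finset.range (N + 1), C (cC d N t) * term N t

lemma term_mul_u {N t : ℕ} (ht : t ≤ N) :
    (X 0 * X 1 : MvPolynomial (Fin 3) ℤ) * term N t = term (N + 1) t := by
  rw [term, term, show N + 1 - t = (N - t) + 1 by omega]; ring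

lemma term_mul_F (N t : ℕ) :
    (X 0 * X 1 - (X 2) ^ 2 : MvPolynomial (Fin 3) ℤ) * term N t = term (N + 1) (t + 1) := by
  rw [term, term, Nat.succ_sub_succ]; ring

lemma mul_u_Bp (d : ℤ) (N : ℕ) :
    (X 0 * X 1 : MvPolynomial (Fin 3) ℤ) * Bp d N =
      ∑ t ∈ Finset.range (N + 2), C (cB d N t) * term (N + 1) t := by
  rw [Finset.sum_range_succ, cB_zero, map_zero, zero_mul, add_zero, Bp, Finset.mul_sum]
  refine Finset.sum_congr rfl fun t ht => ?_
  rw [Finset.mem_range] at ht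
  rw [← term_mul_u (by omega : t ≤ N)]; ring

lemma mul_u_Cpo (d : ℤ) (N : ℕ) :
    (X 0 * X 1 : MvPolynomial (Fin 3) ℤ) * Cpo d N =
      ∑ t ∈ Finset.range (N + 2), C (cC d N t) * term (N + 1) t := by
  rw [Finset.sum_range_succ, cC_zero, map_zero, zero_mul, add_zero, Cpo, Finset.mul_sum]
  refine Finset.sum_congr rfl fun t ht => ?_
  rw [Finset.mem_range] at ht
  rw [← term_mul_u (by omega : t ≤ N)]; ring

lemma mul_F_Cpo (d : ℤ) (N : ℕ) :
    (X 0 * X 1 - (X 2) ^ 2 : MvPolynomial (Fin 3) ℤ) * Cpo d N =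
      ∑ t ∈ Finset.range (N + 2),
        (if t = 0 then 0 else C (cC d N (t - 1))) * term (N + 1) t := by
  have hsr := Finset.sum_range_succ'
    (fun t => (if t = 0 then (0 : MvPolynomial (Fin 3) ℤ) else C (cC d N (t - 1))) * term (N + 1) t)
    (N + 1)
  rw [hsr]
  simp only [if_pos rfl, zero_mul, add_zero, Nat.succ_ne_zero, if_neg, Nat.add_sub_cancel,
    ite_true, ite_false]
  rw [Cpo, Finset.mul_sum]
  refine Finset.sum_congr rfl fun t ht => ?_
  rw [← term_mul_F]; ring

lemma star1 (d : ℤ) (N : ℕ) :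
    Bp d (N + 1) =
      C (4 * N + 3 - d) * ((X 2) ^ 2 * Cpo d N) +
        C ((2 * N + 1) * (d - 2 * N - 1)) * ((X 0 * X 1) * Bp d N) := by
  have hz : ((X 2 : MvPolynomial (Fin 3) ℤ)) ^ 2 * Cpo d N =
      (X 0 * X 1) * Cpo d N - (X 0 * X 1 - (X 2) ^ 2) * Cpo d N := by ring
  rw [hz, mul_u_Cpo, mul_F_Cpo, mul_u_Bp, Bp]
  rw [← Finset.sum_sub_distrib, Finset.mul_sum, Finset.mul_sum, ← Finset.sum_add_distrib]
  refine Finset.sum_congr rfl fun t ht => ?_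
  rw [Finset.mem_range] at ht
  rw [coef1 d N t (by omega)]
  split_ifs with h0 <;>
    · simp only [map_sub, map_add, map_mul, map_zero]
      ring

lemma star2 (d : ℤ) (N : ℕ) :
    Cpo d (N + 1) =
      C (4 * N + 5 - d) * Bp d (N + 1) +
        C ((2 * N + 2) * (d - 2 * N - 2)) * ((X 0 * X 1) * Cpo d N) := by
  rw [mul_u_Cpo, Cpo, Bp, Finset.mul_sum, Finset.mul_sum, ← Finset.sum_add_distrib]
  refine Finset.sum_congr rfl fun t ht => ?_
  rw [Finset.mem_range] at ht
  rw [coef2 d N t (by omega)]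
  simp only [map_sub, map_add, map_mul, map_zero]
  ring

end DetLmatAux

namespace DetLmatAux

lemma Lmat_castSucc (d m : ℕ) :
    (Lmat ℤ d (m + 1)).submatrix Fin.castSucc Fin.castSucc = Lmat ℤ d m := by
  ext i j
  simp [Lmat, Matrix.submatrix_apply]

lemma det_Lmat_rec (d n : ℕ) :
    (Lmat ℤ d (n + 2)).det =
      C (2 * (n : ℤ) + 4 - ((d : ℤ) + 1)) * X 2 * (Lmat ℤ d (n + 1)).det +
        C (((n : ℤ) + 1) * ((d : ℤ) - ((n : ℤ) + 1))) * (X 0 * X 1) * (Lmat ℤ d n).det := by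
  set A := Lmat ℤ d (n + 2) with hA
  set j0 : Fin (n + 2) := ⟨n, by omega⟩ with hj0
  rw [Matrix.det_succ_row A (Fin.last (n + 1))]
  rw [Fintype.sum_eq_add j0 (Fin.last (n + 1))
      (by simp [hj0, Fin.ext_iff, Fin.val_last])
      (fun j hj => by
        have h1 : (j : ℕ) ≠ n := fun h => hj.1 (by simp [hj0, Fin.ext_iff, h])
        have h2 : (j : ℕ) ≠ n + 1 := fun h => hj.2 (by simp [Fin.ext_iff, Fin.val_last, h])
        have h3 : (j : ℕ) < n + 2 := j.isLt
        simp only [hA, Lmat, Matrix.of_apply, Fin.val_last]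
        rw [if_neg (by omega), if_neg (by omega), if_neg (by omega)]
        ring)]
  -- the diagonal term
  have hdiag : A (Fin.last (n + 1)) (Fin.last (n + 1)) =
      C (2 * (n : ℤ) + 4 - ((d : ℤ) + 1)) * X 2 := by
    simp only [hA, Lmat, Matrix.of_apply, Fin.val_last, if_pos rfl, Int.cast_id]
    norm_num
    ring
  have hminor1 : A.submatrix (Fin.last (n + 1)).succAbove (Fin.last (n + 1)).succAbove =
      Lmat ℤ d (n + 1) := by
    rw [Fin.succAbove_last, hA, Lmat_castSucc]
  -- the subdiagonal entry
  have hsub : A (Fin.last (n + 1)) j0 = - (C ((d : ℤ) - ((n : ℤ) + 1)) * X 1) := by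
    simp only [hA, Lmat, Matrix.of_apply, Fin.val_last, hj0, Int.cast_id]
    norm_num
    rw [if_neg (show ¬ n = n + 1 + 1 by omega)]
    ring
  -- the second minor
  have hM1 : (A.submatrix (Fin.last (n + 1)).succAbove j0.succAbove).det =
      C ((n : ℤ) + 1) * X 0 * (Lmat ℤ d n).det := by
    rw [Matrix.det_succ_column _ (Fin.last n)]
    rw [Fintype.sum_eq_single (Fin.last n)
      (fun i hi => by
        have h1 : (i : ℕ) ≠ n := fun h => hi (by simp [Fin.ext_iff, Fin.val_last, h])
        have h3 : (i : ℕ) < n + 1 := i.isLt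
        have hjlast : j0.succAbove (Fin.last n) = Fin.last (n + 1) := by
          rw [Fin.succAbove_of_le_castSucc]
          · rfl
          · simp [hj0, Fin.le_def]
        simp only [Matrix.submatrix_apply, Fin.succAbove_last, hjlast]
        simp only [hA, Lmat, Matrix.of_apply, Fin.coe_castSucc, Fin.val_last]
        rw [if_neg (by omega), if_neg (by omega), if_neg (by omega)]
        ring)]
    have hjlast : j0.succAbove (Fin.last n) = Fin.last (n + 1) := by
      rw [Fin.succAbove_of_le_castSucc]
      · rfl
      · simp [hj0, Fin.le_def]
    have hentry : A.submatrix (Fin.last (n + 1)).succAbove j0.succAbove (Fin.last n)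
        (Fin.last n) = C ((n : ℤ) + 1) * X 0 := by
      simp only [Matrix.submatrix_apply, Fin.succAbove_last, hjlast]
      simp only [hA, Lmat, Matrix.of_apply, Fin.coe_castSucc, Fin.val_last, Int.cast_id]
      norm_num
    have hminor2 : ((A.submatrix (Fin.last (n + 1)).succAbove j0.succAbove).submatrix
        (Fin.last n).succAbove (Fin.last n).succAbove).det = (Lmat ℤ d n).det := by
      congr 1
      rw [Matrix.submatrix_submatrix]
      refine Matrix.ext fun k l => ?_
      have hval : (j0.succAbove (Fin.castSucc l) : ℕ) = (l : ℕ) := by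
        rw [Fin.succAbove_of_castSucc_lt]
        · simp
        · simp [hj0, Fin.lt_def]
      simp only [Matrix.submatrix_apply, Function.comp_apply, Fin.succAbove_last, hA, Lmat,
        Matrix.of_apply, Fin.coe_castSucc, hval]
    rw [hentry, hminor2, Fin.val_last]
    rw [show (-1 : MvPolynomial (Fin 3) ℤ) ^ (n + n) = 1 by
      rw [← two_mul]; exact Even.neg_one_pow ⟨n, by ring⟩]
    ring
  rw [hdiag, hminor1, hsub, hM1, Fin.val_last, hj0]
  rw [show ((n + 1) + (n + 1) : ℕ) = 2 * n + 2 by ring, show ((n + 1) + n : ℕ) = 2 * n + 1 by ring]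
  rw [show (-1 : MvPolynomial (Fin 3) ℤ) ^ (2 * n + 2) = 1 by
      exact Even.neg_one_pow ⟨n + 1, by ring⟩,
    show (-1 : MvPolynomial (Fin 3) ℤ) ^ (2 * n + 1) = -1 by
      exact Odd.neg_one_pow ⟨n, by ring⟩]
  rw [map_mul]
  ring

end DetLmatAux


namespace DetLmatAux

lemma Apoly_even (d N : ℕ) : Apoly d (2 * N) = Bp (d : ℤ) N := by
  have h1 : 2 * N / 2 = N := by omega
  have h2 : 2 * N % 2 = 0 := by omega
  rw [Apoly, h1, h2, pow_zero, one_mul, Bp]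
  refine Finset.sum_congr rfl fun t ht => ?_
  simp only [cB, Pp, Qp, term, Nat.add_zero]
  ring


lemma Apoly_odd (d N : ℕ) : Apoly d (2 * N + 1) = X 2 * Cpo (d : ℤ) N := by
  have h1 : (2 * N + 1) / 2 = N := by omega
  have h2 : (2 * N + 1) % 2 = 1 := by omega
  rw [Apoly, h1, h2, pow_one, Cpo, Finset.mul_sum, Finset.mul_sum]
  refine Finset.sum_congr rfl fun t ht => ?_
  simp only [cC, Pp, Qp, term]
  ring

lemma Apoly_rec (d n : ℕ) :
    Apoly d (n + 2) =
      C (2 * (n : ℤ) + 4 - ((d : ℤ) + 1)) * X 2 * Apoly d (n + 1) +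
        C (((n : ℤ) + 1) * ((d : ℤ) - ((n : ℤ) + 1))) * (X 0 * X 1) * Apoly d n := by
  rcases Nat.even_or_odd' n with ⟨N, hn | hn⟩ <;> subst hn
  · rw [show 2 * N + 2 = 2 * (N + 1) by ring, Apoly_even, Apoly_odd, Apoly_even]
    rw [show (2 * ((2 * N : ℕ) : ℤ) + 4 - ((d : ℤ) + 1)) = 4 * (N : ℤ) + 3 - (d : ℤ) by
        push_cast; ring,
      show ((((2 * N : ℕ) : ℤ) + 1) * ((d : ℤ) - (((2 * N : ℕ) : ℤ) + 1))) =
        (2 * (N : ℤ) + 1) * ((d : ℤ) - 2 * (N : ℤ) - 1) by push_cast; ring]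
    rw [star1 (d : ℤ) N]
    ring
  · rw [show 2 * N + 1 + 2 = 2 * (N + 1) + 1 by ring, show 2 * N + 1 + 1 = 2 * (N + 1) by ring,
      Apoly_odd, Apoly_even, Apoly_odd]
    rw [show (2 * ((2 * N + 1 : ℕ) : ℤ) + 4 - ((d : ℤ) + 1)) = 4 * (N : ℤ) + 5 - (d : ℤ) by
        push_cast; ring,
      show ((((2 * N + 1 : ℕ) : ℤ) + 1) * ((d : ℤ) - (((2 * N + 1 : ℕ) : ℤ) + 1))) =
        (2 * (N : ℤ) + 2) * ((d : ℤ) - 2 * (N : ℤ) - 2) by push_cast; ring]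
    rw [star2 (d : ℤ) N]
    ring

lemma Apoly_zero (d : ℕ) : Apoly d 0 = 1 := by
  rw [show (0 : ℕ) = 2 * 0 by ring, Apoly_even, Bp]
  simp [cB, Pp, Qp, term]

lemma Apoly_one (d : ℕ) : Apoly d 1 = C (1 - (d : ℤ)) * X 2 := by
  rw [Apoly]
  norm_num [Finset.sum_range_one]
  ring

lemma det_Lmat_zero (d : ℕ) : (Lmat ℤ d 0).det = 1 := Matrix.det_fin_zero

lemma det_Lmat_one (d : ℕ) : (Lmat ℤ d 1).det = C (1 - (d : ℤ)) * X 2 := by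
  rw [Matrix.det_fin_one]
  simp only [Lmat, Matrix.of_apply, Int.cast_id]
  norm_num
  ring

end DetLmatAux

/-- `det L_n = A_n` for all `n ≥ 0`. -/
theorem det_Lmat_eq_Apoly (d : ℕ) (hd : 0 < d) (n : ℕ) :
    (Lmat ℤ d n).det = Apoly d n := by
  induction n using Nat.strong_induction_on with
  | _ n ih =>
    match n with
    | 0 => rw [DetLmatAux.det_Lmat_zero, DetLmatAux.Apoly_zero]
    | 1 => rw [DetLmatAux.det_Lmat_one, DetLmatAux.Apoly_one]
    | (m + 2) =>
      rw [DetLmatAux.det_Lmat_rec, DetLmatAux.Apoly_rec, ih (m + 1) (by omega),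
        ih m (by omega)]
end

section
/- Let d be a positive odd integer and let M be the d × d tridiagonal matrix over ℤ[x,y,z] with (i,j)-entry (2i-(d+1))z when i=j, i·x when j=i+1, -((d+1)-i)y when j=i-1, and 0 otherwise. Then det M = 0. -/
open Finset MvPolynomial

theorem Matrix.det_eq_det_of_mul_eq_mul {n R : Type*} [Fintype n] [DecidableEq n] [CommRing R]
    {A B D : Matrix n n R} (h : D * A = B * D) (hD : IsLeftRegular D.det) : A.det = B.det :=
  hD <| by simpa only [Matrix.det_mul, mul_comm B.det] using congrArg Matrix.det h

namespace Lmat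

variable {R : Type*} [CommRing R]

noncomputable def swapXY : MvPolynomial (Fin 3) R →ₐ[R] MvPolynomial (Fin 3) R :=
  rename (Equiv.swap 0 1)

@[simp] lemma swapXY_X_zero : swapXY (X 0 : MvPolynomial (Fin 3) R) = X 1 := by
  simp [swapXY]

@[simp] lemma swapXY_X_one : swapXY (X 1 : MvPolynomial (Fin 3) R) = X 0 := by
  simp [swapXY]

@[simp] lemma swapXY_X_two : swapXY (X 2 : MvPolynomial (Fin 3) R) = X 2 := by
  simp [swapXY, Equiv.swap_apply_of_ne_of_ne]

theorem submatrix_rev (d : ℕ) :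
    (Lmat R d d).submatrix Fin.rev Fin.rev = -(Lmat R d d).map swapXY := by
  refine Matrix.ext fun i j => ?_
  have := i.isLt
  have := j.isLt
  simp only [Lmat, Matrix.submatrix_apply, Matrix.map_apply, Matrix.neg_apply, Matrix.of_apply,
    Fin.val_rev]
  split_ifs <;> (try omega) <;>
    simp only [map_mul, algHom_C, algebraMap_eq, swapXY_X_zero, swapXY_X_one, swapXY_X_two,
      map_zero, neg_zero, ← neg_mul, ← map_neg, ← Int.cast_neg] <;>
    congr 3 <;> omega

theorem diagonal_mul_eq_map_swapXY_mul (d : ℕ) :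
    Matrix.diagonal (fun i : Fin d => (X 0 ^ (i : ℕ) * X 1 ^ (d - i) : MvPolynomial (Fin 3) R)) *
        Lmat R d d =
      (Lmat R d d).map swapXY *
        Matrix.diagonal (fun i : Fin d => X 0 ^ (i : ℕ) * X 1 ^ (d - i)) := by
  refine Matrix.ext fun i j => ?_
  have := i.isLt
  have := j.isLt
  rw [Matrix.diagonal_mul, Matrix.mul_diagonal]
  simp only [Lmat, Matrix.map_apply, Matrix.of_apply]
  split_ifs with hij hsucc hpred
  · simp only [map_mul, algHom_C, algebraMap_eq, swapXY_X_two, hij]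
    ring
  · simp only [map_mul, algHom_C, algebraMap_eq, swapXY_X_zero, hsucc,
      show d - (i : ℕ) = d - ((i : ℕ) + 1) + 1 by omega]
    ring
  · simp only [map_mul, algHom_C, algebraMap_eq, swapXY_X_one, hpred,
      show d - (j : ℕ) = d - ((j : ℕ) + 1) + 1 by omega]
    ring
  · simp only [map_zero, mul_zero, zero_mul]

theorem det_map_swapXY (d : ℕ) : ((Lmat R d d).map swapXY).det = (Lmat R d d).det := by
  refine (Matrix.det_eq_det_of_mul_eq_mul (diagonal_mul_eq_map_swapXY_mul d) ?_).symm
  rw [Matrix.det_diagonal]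
  exact (IsRegular.prod fun i _ => (isRegular_X_pow _).mul (isRegular_X_pow _)).left

theorem det_eq_neg_one_pow_mul_det (d : ℕ) :
    (Lmat R d d).det = (-1) ^ d * (Lmat R d d).det := by
  calc (Lmat R d d).det = ((Lmat R d d).submatrix Fin.revPerm Fin.revPerm).det :=
        (Matrix.det_submatrix_equiv_self Fin.revPerm _).symm
    _ = (-(Lmat R d d).map swapXY).det := congrArg Matrix.det (submatrix_rev d)
    _ = (-1) ^ d * (Lmat R d d).det := by
        rw [Matrix.det_neg, Fintype.card_fin, det_map_swapXY]

end Lmat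

theorem det_Lmat_odd_general (d : ℕ) (hodd : Odd d) :
    (Lmat ℤ d d).det = 0 := by
  have h := Lmat.det_eq_neg_one_pow_mul_det (R := ℤ) d
  rwa [hodd.neg_one_pow, neg_one_mul, CharZero.eq_neg_self_iff] at h

/-- If `d` is a positive odd integer, then the determinant of the `d × d` tridiagonal matrix
`M = L_d` is zero. -/
theorem det_Lmat_odd (d : ℕ) (hd : 0 < d) (hodd : Odd d) :
    (Lmat ℤ d d).det = 0 :=
  det_Lmat_odd_general d hodd
end

section
/- Let d = 2D be a positive even integer and M the d × d tridiagonal matrix over ℤ[x,y,z] with (i,j)-entry (2i-(d+1))z when i=j, i·x when j=i+1, -((d+1)-i)y when j=i-1, and 0 otherwise. Then det M = (∏_{h=1}^{D} (2h-1)²) · (xy - z²)^D. -/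
open Finset MvPolynomial

namespace DetLmatAux

/-- the odd double factorial `1·3·⋯·(2j-1)` -/
def odf : ℕ → ℕ
  | 0 => 1
  | j + 1 => (2 * j + 1) * odf j

lemma odf_fact (j : ℕ) : 2 ^ j * j.factorial * odf j = (2 * j).factorial := by
  induction j with
  | zero => rfl
  | succ n ih =>
      have h : 2 * (n + 1) = (2 * n) + 1 + 1 := by ring
      rw [h, Nat.factorial_succ, Nat.factorial_succ, Nat.factorial_succ, ← ih, odf]
      ring

lemma odf_cast (m : ℕ) : ((odf m : ℕ) : ℤ) = ∏ k ∈ Finset.range m, (2 * (k : ℤ) + 1) := by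
  induction m with
  | zero => simp [odf]
  | succ n ih =>
      rw [Finset.prod_range_succ, ← ih, odf]
      push_cast
      ring

lemma choose_odf (D j : ℕ) (h : j ≤ D) :
    (2 * D).choose (2 * j) * odf j * odf (D - j) = D.choose j * odf D := by
  have hK : 0 < 2 ^ D * j.factorial * (D - j).factorial := by positivity
  apply Nat.eq_of_mul_eq_mul_right hK
  have e1 := odf_fact j
  have e2 := odf_fact (D - j)
  have e3 := odf_fact D
  have h1 : (2 * D).choose (2 * j) * (2 * j).factorial * (2 * (D - j)).factorial
      = (2 * D).factorial := by
    have := Nat.choose_mul_factorial_mul_factorial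
      (show 2 * j ≤ 2 * D by omega) (n := 2 * D)
    have h4 : 2 * D - 2 * j = 2 * (D - j) := by omega
    rwa [h4] at this
  have h2 : D.choose j * j.factorial * (D - j).factorial = D.factorial :=
    Nat.choose_mul_factorial_mul_factorial h
  have hsplit : 2 ^ D = 2 ^ j * 2 ^ (D - j) := by
    rw [← pow_add]; congr 1; omega
  calc (2 * D).choose (2 * j) * odf j * odf (D - j) * (2 ^ D * j.factorial * (D - j).factorial)
      = (2 * D).choose (2 * j) * (2 ^ j * j.factorial * odf j)
          * (2 ^ (D - j) * (D - j).factorial * odf (D - j)) := by rw [hsplit]; ring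
    _ = (2 * D).choose (2 * j) * (2 * j).factorial * (2 * (D - j)).factorial := by
          rw [e1, e2]
    _ = (2 * D).factorial := h1
    _ = 2 ^ D * D.factorial * odf D := e3.symm
    _ = (D.choose j * j.factorial * (D - j).factorial) * (2 ^ D * odf D) := by rw [h2]; ring
    _ = D.choose j * odf D * (2 ^ D * j.factorial * (D - j).factorial) := by ring

/-- `∏_{k=1}^m (2k-1-d)` -/
def Pz (d m : ℕ) : ℤ := ∏ k ∈ Finset.range m, (2 * (k : ℤ) + 1 - d)

/-- coefficient of `(xy)^j z^(n-2j)` in the `n`-th leading minor -/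
def ec (d n j : ℕ) : ℤ := (-1) ^ j * (n.choose (2 * j)) * odf j * Pz d (n - j)

/-- closed form for the determinant of `Lmat d n` -/
noncomputable def FF (d n : ℕ) : MvPolynomial (Fin 3) ℤ :=
  ∑ j ∈ Finset.range (n + 1), C (ec d n j) * (X 0 * X 1) ^ j * X 2 ^ (n - 2 * j)

lemma ec_rec (d n j : ℕ) :
    ec d (n + 2) (j + 1) =
      ((2 * (n : ℤ) + 3) - d) * ec d (n + 1) (j + 1)
        + ((n : ℤ) + 1) * ((d : ℤ) - n - 1) * ec d n j := by
  rcases lt_trichotomy n (2 * j) with h | h | h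
  · -- all binomial coefficients vanish
    have t1 : (n + 2).choose (2 * (j + 1)) = 0 := Nat.choose_eq_zero_of_lt (by omega)
    have t2 : (n + 1).choose (2 * (j + 1)) = 0 := Nat.choose_eq_zero_of_lt (by omega)
    have t3 : n.choose (2 * j) = 0 := Nat.choose_eq_zero_of_lt (by omega)
    unfold ec
    rw [t1, t2, t3]
    simp
  · -- n = 2j
    subst h
    have t2 : (2 * j + 1).choose (2 * (j + 1)) = 0 := Nat.choose_eq_zero_of_lt (by omega)
    have t1 : (2 * j + 2).choose (2 * (j + 1)) = 1 := by
      rw [show 2 * (j + 1) = 2 * j + 2 by ring, Nat.choose_self]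
    unfold ec
    rw [t1, t2]
    have ha : 2 * j + 2 - (j + 1) = j + 1 := by omega
    have hb : 2 * j - j = j := by omega
    rw [ha, hb]
    have hP : Pz d (j + 1) = Pz d j * (2 * (j : ℤ) + 1 - d) := by
      rw [Pz, Finset.prod_range_succ]; rfl
    have hodf : ((odf (j + 1) : ℕ) : ℤ) = (2 * (j : ℤ) + 1) * odf j := by
      rw [show odf (j + 1) = (2 * j + 1) * odf j from rfl]; push_cast; ring
    rw [hP, hodf, Nat.choose_self]
    push_cast
    ring
  · -- main case n ≥ 2j+1
    unfold ec
    have ha : n + 2 - (j + 1) = (n - j) + 1 := by omega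
    have hb : n + 1 - (j + 1) = n - j := by omega
    rw [ha, hb]
    have hP : Pz d ((n - j) + 1) = Pz d (n - j) * (2 * ((n : ℤ) - j) + 1 - d) := by
      rw [Pz, Finset.prod_range_succ]
      congr 2
      push_cast [Nat.cast_sub (show j ≤ n by omega)]
      ring
    rw [hP]
    have hc2 : (((n + 2).choose (2 * (j + 1)) : ℕ) : ℤ)
        = (n.choose (2 * j + 2) : ℤ) + 2 * n.choose (2 * j + 1) + n.choose (2 * j) := by
      have e1 : (n + 2).choose (2 * (j + 1))
          = (n + 1).choose (2 * j + 1) + (n + 1).choose (2 * j + 2) := by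
        rw [show 2 * (j + 1) = (2 * j + 1) + 1 by ring]
        exact Nat.choose_succ_succ' (n + 1) (2 * j + 1)
      have e2 : (n + 1).choose (2 * j + 1) = n.choose (2 * j) + n.choose (2 * j + 1) :=
        Nat.choose_succ_succ' n (2 * j)
      have e3 : (n + 1).choose (2 * j + 2) = n.choose (2 * j + 1) + n.choose (2 * j + 2) :=
        Nat.choose_succ_succ' n (2 * j + 1)
      rw [e1, e2, e3]; push_cast; ring
    have hc1 : (((n + 1).choose (2 * (j + 1)) : ℕ) : ℤ)
        = (n.choose (2 * j + 1) : ℤ) + n.choose (2 * j + 2) := by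
      rw [show 2 * (j + 1) = (2 * j + 1) + 1 by ring, Nat.choose_succ_succ' n (2 * j + 1)]
      push_cast; ring
    have hodf : ((odf (j + 1) : ℕ) : ℤ) = (2 * (j : ℤ) + 1) * odf j := by
      rw [show odf (j + 1) = (2 * j + 1) * odf j from rfl]; push_cast; ring
    have h1 : (2 * (j : ℤ) + 2) * n.choose (2 * j + 2)
        = ((n : ℤ) - 2 * j - 1) * n.choose (2 * j + 1) := by
      have hh := Nat.choose_succ_right_eq n (2 * j + 1)
      have hcast : ((n.choose (2 * j + 1 + 1) * (2 * j + 1 + 1) : ℕ) : ℤ)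
          = ((n.choose (2 * j + 1) * (n - (2 * j + 1)) : ℕ) : ℤ) := by exact_mod_cast congrArg (fun t : Nat => (t : Int)) hh
      push_cast [Nat.cast_sub (show 2 * j + 1 ≤ n by omega)] at hcast
      linarith [hcast]
    have h2 : (2 * (j : ℤ) + 1) * n.choose (2 * j + 1)
        = ((n : ℤ) - 2 * j) * n.choose (2 * j) := by
      have hh := Nat.choose_succ_right_eq n (2 * j)
      have hcast : ((n.choose (2 * j + 1) * (2 * j + 1) : ℕ) : ℤ)
          = ((n.choose (2 * j) * (n - 2 * j) : ℕ) : ℤ) := by exact_mod_cast congrArg (fun t : Nat => (t : Int)) hh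
      push_cast [Nat.cast_sub (show 2 * j ≤ n by omega)] at hcast
      linarith [hcast]
    rw [hc2, hc1, hodf]
    linear_combination ((-1 : ℤ) ^ (j + 1) * (odf j : ℤ) * Pz d (n - j)) * (-(2 * (j : ℤ) + 1)) * h1
      + ((-1 : ℤ) ^ (j + 1) * (odf j : ℤ) * Pz d (n - j)) * ((n : ℤ) - 2 * j - d) * h2

lemma FF_rec (d n : ℕ) :
    FF d (n + 2) =
      C ((2 * (n : ℤ) + 3) - d) * X 2 * FF d (n + 1)
        + C (((n : ℤ) + 1) * ((d : ℤ) - n - 1)) * (X 0 * X 1) * FF d n := by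
  have hT : ∀ j : ℕ,
      (C (ec d (n + 2) (j + 1)) * (X 0 * X 1) ^ (j + 1) * X 2 ^ (n + 2 - 2 * (j + 1))
          : MvPolynomial (Fin 3) ℤ) =
        C ((2 * (n : ℤ) + 3) - d) * X 2 *
            (C (ec d (n + 1) (j + 1)) * (X 0 * X 1) ^ (j + 1) * X 2 ^ (n + 1 - 2 * (j + 1)))
          + C (((n : ℤ) + 1) * ((d : ℤ) - n - 1)) * (X 0 * X 1) *
            (C (ec d n j) * (X 0 * X 1) ^ j * X 2 ^ (n - 2 * j)) := by
    intro j
    have he : n + 2 - 2 * (j + 1) = n - 2 * j := by omega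
    rcases le_or_gt (2 * j + 1) n with h | h
    · have he1 : n - 2 * j = (n + 1 - 2 * (j + 1)) + 1 := by omega
      rw [he, he1, pow_succ, ec_rec d n j, map_add, map_mul, map_mul]
      ring
    · have hz : ec d (n + 1) (j + 1) = 0 := by
        unfold ec
        rw [Nat.choose_eq_zero_of_lt (by omega)]
        simp
      rw [he, ec_rec d n j, hz, map_add, map_mul, map_mul, map_zero]
      ring
  have h0 : (C (ec d (n + 2) 0) * (X 0 * X 1) ^ 0 * X 2 ^ (n + 2 - 2 * 0)
      : MvPolynomial (Fin 3) ℤ) =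
      C ((2 * (n : ℤ) + 3) - d) * X 2 *
        (C (ec d (n + 1) 0) * (X 0 * X 1) ^ 0 * X 2 ^ (n + 1 - 2 * 0)) := by
    have hec : ec d (n + 2) 0 = ((2 * (n : ℤ) + 3) - d) * ec d (n + 1) 0 := by
      unfold ec
      norm_num
      have : Pz d (n + 2) = Pz d (n + 1) * (2 * ((n + 1 : ℕ) : ℤ) + 1 - d) := by
        rw [Pz, Finset.prod_range_succ]; rfl
      rw [this]
      push_cast
      ring
    rw [hec, map_mul]
    have : n + 2 - 2 * 0 = (n + 1 - 2 * 0) + 1 := by omega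
    rw [this, pow_succ]
    ring
  have z1 : ec d (n + 1) (n + 1) = 0 := by
    unfold ec; rw [Nat.choose_eq_zero_of_lt (by omega)]; simp
  have z2 : ec d (n + 1) (n + 2) = 0 := by
    unfold ec; rw [Nat.choose_eq_zero_of_lt (by omega)]; simp
  have z3 : ec d n (n + 1) = 0 := by
    unfold ec; rw [Nat.choose_eq_zero_of_lt (by omega)]; simp
  have hFF1 : FF d (n + 1) =
      ∑ j ∈ Finset.range (n + 3), C (ec d (n + 1) j) * (X 0 * X 1) ^ j * X 2 ^ (n + 1 - 2 * j) := by
    rw [FF, Finset.sum_range_succ (n := n + 2), Finset.sum_range_succ (n := n + 1), z1, z2]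
    simp
  have hFFn : FF d n =
      ∑ j ∈ Finset.range (n + 2), C (ec d n j) * (X 0 * X 1) ^ j * X 2 ^ (n - 2 * j) := by
    rw [FF, Finset.sum_range_succ (n := n + 1), z3]
    simp
  rw [FF, hFF1, hFFn]
  conv_lhs => rw [Finset.sum_range_succ']
  conv_rhs => rw [Finset.mul_sum, Finset.mul_sum, Finset.sum_range_succ']
  rw [add_right_comm, ← Finset.sum_add_distrib]
  exact congrArg₂ (· + ·) (Finset.sum_congr rfl fun j _ => hT j) h0

lemma det_rec (d n : ℕ) :
    (Lmat ℤ d (n + 2)).det =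
      C ((2 * (n : ℤ) + 3) - d) * X 2 * (Lmat ℤ d (n + 1)).det
        + C (((n : ℤ) + 1) * ((d : ℤ) - n - 1)) * (X 0 * X 1) * (Lmat ℤ d n).det := by
  have succAbove_val : ∀ {m : ℕ} (p : Fin (m + 1)) (k : Fin m),
      ((p.succAbove k : Fin (m + 1)) : ℕ) = if (k : ℕ) < (p : ℕ) then (k : ℕ) else (k : ℕ) + 1 := by
    intro m p k
    rw [Fin.succAbove]
    split_ifs with h1 h2 h2
    · rfl
    · exact absurd (by simpa [Fin.lt_def] using h1) h2
    · exact absurd (by simpa [Fin.lt_def] using h2) h1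
    · rfl
  have Lmat_sub : ∀ (m k : ℕ) (f g : Fin k → Fin m) (_ : ∀ i, ((f i : Fin m) : ℕ) = (i : ℕ))
      (_ : ∀ i, ((g i : Fin m) : ℕ) = (i : ℕ)),
      (Lmat ℤ d m).submatrix f g = Lmat ℤ d k := by
    intro m k f g hf hg
    ext i j
    simp only [Matrix.submatrix_apply, Lmat, Matrix.of_apply, hf, hg]
  set A := Lmat ℤ d (n + 2) with hA
  set jl : Fin (n + 2) := Fin.last (n + 1) with hjl
  set jn : Fin (n + 2) := ⟨n, by omega⟩ with hjn
  rw [Matrix.det_succ_row A (Fin.last (n + 1))]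
  have hzero : ∀ x ∈ (univ : Finset (Fin (n + 2))), x ∉ ({jn, jl} : Finset (Fin (n + 2))) →
      (-1 : MvPolynomial (Fin 3) ℤ) ^ ((Fin.last (n + 1) : ℕ) + (x : ℕ)) *
        A (Fin.last (n + 1)) x *
        (A.submatrix (Fin.last (n + 1)).succAbove x.succAbove).det = 0 := by
    intro x _ hx
    simp only [Finset.mem_insert, Finset.mem_singleton] at hx
    push_neg at hx
    have hx1 : (x : ℕ) ≠ n := fun h => hx.1 (Fin.ext (by simpa [hjn] using h))
    have hx2 : (x : ℕ) ≠ n + 1 := fun h => hx.2 (Fin.ext (by simpa [hjl] using h))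
    have hentry : A (Fin.last (n + 1)) x = 0 := by
      simp only [hA, Lmat, Matrix.of_apply, Fin.val_last]
      rw [if_neg (by omega), if_neg (by omega), if_neg (by omega)]
    rw [hentry]
    ring
  rw [← Finset.sum_subset (Finset.subset_univ {jn, jl}) hzero]
  rw [Finset.sum_pair (show jn ≠ jl by simp [hjn, hjl, Fin.ext_iff])]
  -- the `jl` term
  have hsignl : ((-1 : MvPolynomial (Fin 3) ℤ)) ^ ((Fin.last (n + 1) : ℕ) + (jl : ℕ)) = 1 := by
    refine Even.neg_one_pow ⟨n + 1, ?_⟩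
    simp [hjl]
  have hentryl : A (Fin.last (n + 1)) jl =
      C (2 * (((n + 1 : ℕ) : ℤ)) + 2 - ((d : ℤ) + 1)) * X 2 := by
    simp only [hA, Lmat, Matrix.of_apply, hjl, Fin.val_last]
    simp
  have hsubl : A.submatrix (Fin.last (n + 1)).succAbove jl.succAbove = Lmat ℤ d (n + 1) := by
    refine Lmat_sub (n + 2) (n + 1) _ _ (fun i => ?_) (fun i => ?_) <;>
      · rw [succAbove_val]
        simp [hjl, Fin.is_le]
  -- the `jn` term
  have hsignn : ((-1 : MvPolynomial (Fin 3) ℤ)) ^ ((Fin.last (n + 1) : ℕ) + (jn : ℕ)) = -1 := by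
    refine Odd.neg_one_pow ⟨n, ?_⟩
    simp [hjn]
    omega
  have hentryn : A (Fin.last (n + 1)) jn =
      C (-(((d : ℤ) + 1) - (((n + 1 : ℕ) : ℤ) + 1))) * X 1 := by
    simp only [hA, Lmat, Matrix.of_apply, hjn, Fin.val_last]
    rw [if_neg (by omega), if_neg (by omega)]
    simp
  have hdetn : (A.submatrix (Fin.last (n + 1)).succAbove jn.succAbove).det =
      C (((n : ℕ) : ℤ) + 1) * X 0 * (Lmat ℤ d n).det := by
    set N := A.submatrix (Fin.last (n + 1)).succAbove jn.succAbove with hN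
    rw [Matrix.det_succ_column N (Fin.last n)]
    have hcol : ∀ (i : Fin (n + 1)), (i : ℕ) < n → N i (Fin.last n) = 0 := by
      intro i hi
      have hri : ((Fin.last (n + 1)).succAbove i : ℕ) = (i : ℕ) := by
        rw [succAbove_val]; simp [Fin.is_lt, Fin.is_le]
      have hci : ((jn.succAbove (Fin.last n) : Fin (n + 2)) : ℕ) = n + 1 := by
        rw [succAbove_val]; simp [hjn]
      simp only [hN, Matrix.submatrix_apply, hA, Lmat, Matrix.of_apply, hri, hci]
      rw [if_neg (by omega), if_neg (by omega), if_neg (by omega)]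
    rw [Finset.sum_eq_single (Fin.last n)]
    · have hrl : ((Fin.last (n + 1)).succAbove (Fin.last n) : ℕ) = n := by
        rw [succAbove_val]; simp
      have hcl : ((jn.succAbove (Fin.last n) : Fin (n + 2)) : ℕ) = n + 1 := by
        rw [succAbove_val]; simp [hjn]
      have hsign : ((-1 : MvPolynomial (Fin 3) ℤ)) ^ ((Fin.last n : ℕ) + (Fin.last n : ℕ)) = 1 :=
        Even.neg_one_pow ⟨n, by simp⟩
      have hentry : N (Fin.last n) (Fin.last n) = C (((n : ℕ) : ℤ) + 1) * X 0 := by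
        simp only [hN, Matrix.submatrix_apply, hA, Lmat, Matrix.of_apply, hrl, hcl]
        rw [if_neg (by omega)]
        simp
      have hsub : (N.submatrix (Fin.last n).succAbove (Fin.last n).succAbove) = Lmat ℤ d n := by
        rw [hN, Matrix.submatrix_submatrix]
        refine Lmat_sub (n + 2) n _ _ (fun i => ?_) (fun i => ?_)
        · simp only [Function.comp]
          rw [succAbove_val, succAbove_val]
          have h2 : (i : ℕ) < n := Fin.is_lt i
          have h3 : (i : ℕ) < n + 1 := by omega
          simp [h2, h3]
        · simp only [Function.comp]
          rw [succAbove_val, succAbove_val]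
          have h1 : (i : ℕ) < n := Fin.is_lt i
          simp [h1, hjn]
      rw [hsign, hentry, hsub]
      ring
    · intro b _ hb
      have hbn : (b : ℕ) < n := by
        have h1 := Fin.is_lt b
        by_contra hcon
        refine hb (Fin.ext ?_)
        simp only [Fin.val_last]
        omega
      rw [hcol b hbn]
      ring
    · intro h
      exact absurd (Finset.mem_univ _) h
  rw [hsignl, hentryl, hsubl, hsignn, hentryn, hdetn]
  have e1 : (2 * (((n + 1 : ℕ) : ℤ)) + 2 - ((d : ℤ) + 1)) = (2 * (n : ℤ) + 3) - d := by
    push_cast; ring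
  have e2 : (-(((d : ℤ) + 1) - (((n + 1 : ℕ) : ℤ) + 1))) = ((n : ℤ) + 1) - d := by
    push_cast; ring
  rw [e1, e2]
  rw [show (((n : ℤ) + 1) * ((d : ℤ) - n - 1)) = -((((n : ℤ) + 1) - d) * ((n : ℤ) + 1)) by ring]
  rw [map_neg, map_mul]
  ring

lemma det_eq_FF (d n : ℕ) : (Lmat ℤ d n).det = FF d n := by
  induction n using Nat.twoStepInduction with
  | zero =>
      rw [Matrix.det_fin_zero, FF]
      simp [ec, odf, Pz]
  | one =>
      rw [Matrix.det_fin_one, FF]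
      simp [Lmat, ec, odf, Pz, Finset.sum_range_succ]
      ring
  | more n ih1 ih2 =>
      rw [det_rec, ih1, ih2, FF_rec]

lemma Pz_even (D j : ℕ) (h : j ≤ D) :
    Pz (2 * D) (2 * D - j) = (-1) ^ D * (odf D : ℤ) * (odf (D - j) : ℤ) := by
  have hsplit : 2 * D - j = D + (D - j) := by omega
  rw [hsplit, Pz, Finset.prod_range_add]
  have h1 : (∏ k ∈ Finset.range D, (2 * (k : ℤ) + 1 - (2 * D : ℕ)))
      = (-1) ^ D * (odf D : ℤ) := by
    have e : ∀ k ∈ Finset.range D, (2 * (k : ℤ) + 1 - (2 * D : ℕ))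
        = (-1) * (2 * ((D - 1 - k : ℕ) : ℤ) + 1) := by
      intro k hk
      rw [Finset.mem_range] at hk
      push_cast [Nat.cast_sub (show k ≤ D - 1 by omega), Nat.cast_sub (show 1 ≤ D by omega)]
      ring
    rw [Finset.prod_congr rfl e, Finset.prod_mul_distrib, Finset.prod_const,
      Finset.card_range, Finset.prod_range_reflect (fun k => (2 * (k : ℤ) + 1)) D, odf_cast]
  have h2 : (∏ k ∈ Finset.range (D - j), (2 * ((D + k : ℕ) : ℤ) + 1 - (2 * D : ℕ)))
      = (odf (D - j) : ℤ) := by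
    rw [odf_cast]
    refine Finset.prod_congr rfl fun k _ => ?_
    push_cast
    ring
  rw [h1, h2]

lemma prod_odd_sq (D : ℕ) :
    (∏ h ∈ Finset.Icc 1 D, (2 * (h : ℤ) - 1) ^ 2) = ((odf D : ℤ)) ^ 2 := by
  induction D with
  | zero => simp [odf]
  | succ n ih =>
      rw [Finset.prod_Icc_succ_top (by omega : 1 ≤ n + 1), ih,
        show odf (n + 1) = (2 * n + 1) * odf n from rfl]
      push_cast
      ring

lemma ec_final (D j : ℕ) (h : j ≤ D) :
    ec (2 * D) (2 * D) j =
      (∏ h ∈ Finset.Icc 1 D, (2 * (h : ℤ) - 1) ^ 2) * (-1) ^ (j + D) * (D.choose j) := by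
  rw [ec, Pz_even D j h, prod_odd_sq]
  have hcast := congrArg (fun t : Nat => (t : Int)) (choose_odf D j h)
  push_cast at hcast
  linear_combination ((-1 : ℤ) ^ (j + D) * (odf D : ℤ)) * hcast

end DetLmatAux

/-- If `d = 2D` is a positive even integer, then the determinant of the `d × d` tridiagonal
matrix `M = L_d` equals `(∏_{h=1}^{D} (2h-1)²) · (xy - z²)^D`. -/
theorem det_Lmat_even (D : ℕ) (hD : 0 < D) :
    (Lmat ℤ (2 * D) (2 * D)).det =
      C (∏ h ∈ Finset.Icc 1 D, (2 * (h : ℤ) - 1) ^ 2) *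
        (X 0 * X 1 - (X 2) ^ 2) ^ D := by
  rw [DetLmatAux.det_eq_FF, DetLmatAux.FF, sub_pow, Finset.mul_sum]
  rw [← Finset.sum_subset (Finset.range_subset_range.2 (show D + 1 ≤ 2 * D + 1 by omega))
    (fun x hx hx' => ?_)]
  · refine Finset.sum_congr rfl fun j hj => ?_
    rw [Finset.mem_range] at hj
    have hjD : j ≤ D := by omega
    rw [DetLmatAux.ec_final D j hjD]
    have hexp : 2 * D - 2 * j = 2 * (D - j) := by omega
    rw [hexp, pow_mul]
    simp only [map_mul, map_pow, map_neg, map_one, map_natCast]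
    ring
  · rw [Finset.mem_range] at hx hx'
    have hz : DetLmatAux.ec (2 * D) (2 * D) x = 0 := by
      rw [DetLmatAux.ec, Nat.choose_eq_zero_of_lt (by omega)]
      simp
    rw [hz]
    simp
end
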